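/- arXiv:math/0507547 — 2 statements merged into one kernel-verified Lean document; each statement's English description precedes it below -/
import Mathlib

section
/- Let P, Q be bounded projections on a Hilbert space H such that P − Q is compact. Then QP : range P → range Q is a Fredholm operator. -/
/-!
For `x ∈ range P` we have `x = Q x + (P - Q) x`, so `T = QP : range P → range Q` satisfies the
estimate `‖x‖ ≤ ‖T x‖ + ‖K x‖` with `K` compact. Such an estimate makes the kernel finite
dimensional (by Riesz, `‖x‖ ≤ ‖K x‖` with `K` compact forces a Banach space to be finite
dimensional) and the range closed (a sequence argument on a complement of the kernel).
For the cokernel, a vector `w ∈ range Q` orthogonal to the range of `T` is in particular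
orthogonal to `Q P w`, whence `‖w‖² = ⟪(Q - P)(1 - P) w, w⟫`: the compact operator
`(Q - P)(1 - P)` dominates the norm on the orthogonal complement of the range.
-/

/-- A bounded operator between normed spaces is Fredholm if its kernel is finite
dimensional, its range is closed, and its cokernel is finite dimensional. -/
def IsFredholm {E F : Type} [NormedAddCommGroup E] [NormedSpace ℂ E]
    [NormedAddCommGroup F] [NormedSpace ℂ F] (T : E →L[ℂ] F) : Prop :=
  FiniteDimensional ℂ (LinearMap.ker (T : E →ₗ[ℂ] F)) ∧ IsClosed (Set.range T) ∧
    FiniteDimensional ℂ (F ⧸ LinearMap.range (T : E →ₗ[ℂ] F))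

open Metric Set Filter Topology NNReal

theorem ContinuousLinearMap.IsIdempotentElem.apply_coe_range {R M : Type*} [Ring R]
    [TopologicalSpace M] [AddCommGroup M] [Module R M] {P : M →L[R] M} (hP : IsIdempotentElem P)
    (x : LinearMap.range (P : M →ₗ[R] M)) : P x = x :=
  (LinearMap.IsIdempotentElem.mem_range_iff (IsIdempotentElem.toLinearMap hP)).1 x.2

theorem FiniteDimensional.of_isCompactOperator_of_norm_le {𝕜 E F : Type*}
    [NontriviallyNormedField 𝕜] [CompleteSpace 𝕜] [NormedAddCommGroup E] [NormedSpace 𝕜 E]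
    [CompleteSpace E] [NormedAddCommGroup F] [NormedSpace 𝕜 F] {K : E →L[𝕜] F}
    (hK : IsCompactOperator K) (h : ∀ x, ‖x‖ ≤ ‖K x‖) : FiniteDimensional 𝕜 E := by
  have hemb : IsClosedEmbedding K :=
    (K.antilipschitz_of_bound (K := 1) (by simpa using h)).isClosedEmbedding K.uniformContinuous
  refine .of_isCompact_closedBall₀ 𝕜 one_pos <|
    (hemb.isCompact_preimage (hK.isCompact_closure_image_closedBall 1)).of_isClosed_subset
      isClosed_closedBall fun x hx => subset_closure (mem_image_of_mem K hx)

namespace ContinuousLinearMap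

variable {𝕜 E F G : Type*} [RCLike 𝕜] [NormedAddCommGroup E] [NormedSpace 𝕜 E] [CompleteSpace E]
  [NormedAddCommGroup F] [NormedSpace 𝕜 F] [NormedAddCommGroup G] [NormedSpace 𝕜 G]
  {A : E →L[𝕜] F} {K : E →L[𝕜] G} {C : ℝ≥0}

theorem exists_antilipschitzWith_of_norm_le_add (hA : Function.Injective A)
    (hK : IsCompactOperator K) (h : ∀ x, ‖x‖ ≤ C * ‖A x‖ + ‖K x‖) :
    ∃ c, AntilipschitzWith c A := by
  have hΦ : IsClosedEmbedding (A.prod K) := by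
    refine ((A.prod K).antilipschitz_of_bound (K := C + 1) fun x => ?_)
      |>.isClosedEmbedding (A.prod K).uniformContinuous
    calc ‖x‖ ≤ C * ‖A x‖ + ‖K x‖ := h x
      _ ≤ C * ‖(A x, K x)‖ + ‖(A x, K x)‖ := by gcongr <;> simp
      _ = (C + 1 : ℝ≥0) * ‖(A.prod K) x‖ := by push_cast; ring_nf
  -- Otherwise there are unit vectors `xₙ` with `A xₙ → 0`; along a subsequence `K xₙ` converges,
  -- so `(A, K) xₙ` converges to a point `(0, y) = (A z, K z)` of the closed range, and `z = 0`.
  by_contra! hA'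
  have hseq (n : ℕ) : ∃ x, ‖x‖ = 1 ∧ (n + 1) * ‖A x‖ < 1 := by
    by_contra! hn
    exact hA' (n + 1) (antilipschitz_of_bound_of_norm_one A (by exact_mod_cast hn))
  choose x hx_norm hx_small using hseq
  obtain ⟨y, -, φ, hφ, hKy⟩ := (hK.isCompact_closure_image_closedBall 1).tendsto_subseq
    fun n => subset_closure (mem_image_of_mem K (mem_closedBall_zero_iff.2 (hx_norm n).le))
  have hA0 : Tendsto (fun n => A (x n)) atTop (𝓝 0) := by
    refine squeeze_zero_norm (fun n => ?_) tendsto_one_div_add_atTop_nhds_zero_nat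
    rw [le_div_iff₀' (by positivity)]
    exact (hx_small n).le
  have hΦlim : Tendsto (A.prod K ∘ x ∘ φ) atTop (𝓝 (0, y)) :=
    (hA0.comp hφ.tendsto_atTop).prodMk_nhds hKy
  obtain ⟨z, hz⟩ := hΦ.isClosed_range.mem_of_tendsto hΦlim (.of_forall fun n => mem_range_self _)
  have hz0 : z = 0 := hA (by simpa using congrArg Prod.fst hz)
  rw [← hz, hz0, ← hΦ.tendsto_nhds_iff] at hΦlim
  have hnorm := (continuous_norm.tendsto 0).comp hΦlim
  simp only [Function.comp_def, hx_norm, norm_zero] at hnorm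
  exact one_ne_zero (tendsto_nhds_unique tendsto_const_nhds hnorm)

theorem finiteDimensional_ker_of_norm_le_add (hK : IsCompactOperator K)
    (h : ∀ x, ‖x‖ ≤ C * ‖A x‖ + ‖K x‖) :
    FiniteDimensional 𝕜 (LinearMap.ker (A : E →ₗ[𝕜] F)) := by
  have := A.isClosed_ker.completeSpace_coe
  refine .of_isCompactOperator_of_norm_le (K := K ∘L (LinearMap.ker (A : E →ₗ[𝕜] F)).subtypeL)
    (hK.comp_clm _) fun x => ?_
  simpa [x.2] using h x

theorem isClosed_range_of_norm_le_add (hK : IsCompactOperator K)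
    (h : ∀ x, ‖x‖ ≤ C * ‖A x‖ + ‖K x‖) : IsClosed (range A) := by
  have := finiteDimensional_ker_of_norm_le_add hK h
  obtain ⟨M, hM, hcompl⟩ := (Submodule.ClosedComplemented.of_finiteDimensional
    (LinearMap.ker (A : E →ₗ[𝕜] F))).exists_isClosed_isCompl
  have := hM.completeSpace_coe
  have hinj : Function.Injective (A ∘L M.subtypeL) := by
    refine (injective_iff_map_eq_zero _).2 fun x hx => ?_
    exact Subtype.ext (Submodule.disjoint_def.1 hcompl.disjoint x hx x.2)
  obtain ⟨c, hc⟩ := exists_antilipschitzWith_of_norm_le_add (K := K ∘L M.subtypeL) hinj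
    (hK.comp_clm _) fun x => h x
  have hrange : range (A ∘L M.subtypeL) = range A := by
    refine (range_comp_subset_range M.subtypeL A).antisymm ?_
    rintro _ ⟨x, rfl⟩
    obtain ⟨k, hk, m, hm, rfl⟩ := Submodule.mem_sup.1 (hcompl.sup_eq_top ▸ Submodule.mem_top (x := x))
    exact ⟨⟨m, hm⟩, by simpa using hk⟩
  exact hrange ▸ hc.isClosed_range (A ∘L M.subtypeL).uniformContinuous

end ContinuousLinearMap

section InnerProductSpace

variable {𝕜 E : Type*} [RCLike 𝕜] [NormedAddCommGroup E] [InnerProductSpace 𝕜 E]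

local notation "⟪" x ", " y "⟫" => @inner 𝕜 _ _ x y

theorem Submodule.finiteDimensional_quotient_of_norm_le {F : Type*} [NormedAddCommGroup F]
    [NormedSpace 𝕜 F] [CompleteSpace E] {R : Submodule 𝕜 E} (hR : IsClosed (R : Set E))
    {K : E →L[𝕜] F} (hK : IsCompactOperator K) (h : ∀ w ∈ Rᗮ, ‖w‖ ≤ ‖K w‖) :
    FiniteDimensional 𝕜 (E ⧸ R) := by
  have := hR.completeSpace_coe
  have : FiniteDimensional 𝕜 Rᗮ :=
    .of_isCompactOperator_of_norm_le (K := K ∘L Rᗮ.subtypeL) (hK.comp_clm _) fun w => h w w.2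
  exact (R.quotientEquivOfIsCompl Rᗮ R.isCompl_orthogonal).symm.finiteDimensional

theorem norm_le_of_inner_self_eq_inner {x y : E} (h : ⟪x, x⟫ = ⟪y, x⟫) : ‖x‖ ≤ ‖y‖ := by
  rcases eq_or_ne x 0 with rfl | hx
  · simp
  refine le_of_mul_le_mul_right ?_ (norm_pos_iff.2 hx)
  calc ‖x‖ * ‖x‖ = ‖⟪x, x⟫‖ := by simp [sq]
    _ = ‖⟪y, x⟫‖ := by rw [h]
    _ ≤ ‖y‖ * ‖x‖ := norm_inner_le_norm y x

theorem IsIdempotentElem.norm_le_norm_sub_mul_one_sub_apply {P Q : E →L[𝕜] E}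
    (hP : IsIdempotentElem P) {w : E} (hQw : Q w = w) (hw : ⟪Q (P w), w⟫ = 0) :
    ‖w‖ ≤ ‖((Q - P) * (1 - P)) w‖ := by
  refine norm_le_of_inner_self_eq_inner (𝕜 := 𝕜) ?_
  have hPw : P (P w) = P w := congrArg (· w) hP.eq
  have : ((Q - P) * (1 - P)) w = w - Q (P w) := by simp [map_sub, hQw, hPw]
  rw [this, inner_sub_left, hw, sub_zero]

end InnerProductSpace

/-- If `P, Q` are bounded projections on a Hilbert space with `P − Q` compact, then
`QP : range P → range Q` is a Fredholm operator. -/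
theorem fredholm_pair_of_compact_difference
    {H : Type} [NormedAddCommGroup H] [InnerProductSpace ℂ H] [CompleteSpace H]
    (P Q : H →L[ℂ] H) (hP : P.comp P = P) (hQ : Q.comp Q = Q)
    (hcpt : IsCompactOperator (⇑(P - Q))) :
    IsFredholm (((Q.comp P).comp (LinearMap.range (P : H →ₗ[ℂ] H)).subtypeL).codRestrict
      (LinearMap.range (Q : H →ₗ[ℂ] H)) (fun x => LinearMap.mem_range_self (Q : H →ₗ[ℂ] H) (P (x : H)))) := by
  set V := LinearMap.range (P : H →ₗ[ℂ] H)
  set W := LinearMap.range (Q : H →ₗ[ℂ] H)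
  set T := ((Q.comp P).comp V.subtypeL).codRestrict W fun x => LinearMap.mem_range_self _ (P x)
  have := (ContinuousLinearMap.IsIdempotentElem.isClosed_range hP).completeSpace_coe
  have := (ContinuousLinearMap.IsIdempotentElem.isClosed_range hQ).completeSpace_coe
  have hPx (x : V) : P x = x := ContinuousLinearMap.IsIdempotentElem.apply_coe_range hP x
  have hQw (w : W) : Q w = w := ContinuousLinearMap.IsIdempotentElem.apply_coe_range hQ w
  have hTx (x : V) : (T x : H) = Q x := congrArg Q (hPx x)
  have hK : IsCompactOperator ((P - Q) ∘L V.subtypeL) := hcpt.comp_clm _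
  have hest (x : V) : ‖x‖ ≤ (1 : ℝ≥0) * ‖T x‖ + ‖((P - Q) ∘L V.subtypeL) x‖ := by
    have hx : (x : H) = T x + (P - Q) x := by
      rw [hTx, sub_apply, hPx]
      abel
    calc ‖x‖ = ‖(T x : H) + (P - Q) x‖ := by rw [← hx]; rfl
      _ ≤ _ := by simpa using norm_add_le (T x : H) ((P - Q) x)
  have hclosed := T.isClosed_range_of_norm_le_add hK hest
  have hQP : IsCompactOperator (Q - P) := neg_sub P Q ▸ hcpt.neg
  have hK' : IsCompactOperator (((Q - P) * (1 - P)) ∘L W.subtypeL) :=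
    (hQP.comp_clm (1 - P)).comp_clm _
  refine ⟨T.finiteDimensional_ker_of_norm_le_add hK hest, hclosed,
    Submodule.finiteDimensional_quotient_of_norm_le (LinearMap.coe_range T.toLinearMap ▸ hclosed)
      hK' fun w hw => ?_⟩
  refine IsIdempotentElem.norm_le_norm_sub_mul_one_sub_apply hP (hQw w) ?_
  have := (Submodule.mem_orthogonal _ _).1 hw (T ⟨P w, LinearMap.mem_range_self _ _⟩)
    (LinearMap.mem_range_self _ _)
  simpa [Submodule.coe_inner, hTx] using this
end

section
/- Let P, Q, R be bounded projections on a Hilbert space H such that all pairwise differences are compact. Then the Fredholm index of RQP : range P → range R equals the index of QP : range P → range Q plus the index of RQ : range Q → range R. -/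
/-!
For idempotents `P`, `Q` with `P - Q` compact, `PQ : ran Q → ran P` inverts `QP : ran P → ran Q`
modulo compact operators, because `PQ · QP - 1 = P (Q - P)` on `ran P`. An operator between
Hilbert spaces that is invertible modulo compacts has finite-dimensional kernel and cokernel:
the kernel of `1 + K` and the orthogonal complement of its range (closed, since `1 + K` is bounded
below on the complement of its kernel) are closed subspaces on which the norm is dominated by the
compact `K`, hence finite-dimensional by Riesz. Finally `RQP = RQ · QP` on `ran P` since `Q² = Q`,
and the index of linear maps is additive under composition.
-/

/-- The (Fredholm) index of a bounded operator: `dim ker − dim coker`. -/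
noncomputable def findex {E F : Type} [NormedAddCommGroup E] [NormedSpace ℂ E]
    [NormedAddCommGroup F] [NormedSpace ℂ F] (T : E →L[ℂ] F) : ℤ :=
  (Module.finrank ℂ (LinearMap.ker (T : E →ₗ[ℂ] F)) : ℤ)
    - Module.finrank ℂ (F ⧸ LinearMap.range (T : E →ₗ[ℂ] F))

open Metric Filter Topology
open scoped InnerProductSpace

section NormedSpace

variable {𝕜 E F : Type*} [NontriviallyNormedField 𝕜] [NormedAddCommGroup E] [NormedSpace 𝕜 E]
  [NormedAddCommGroup F] [NormedSpace 𝕜 F]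

theorem FiniteDimensional.of_norm_le_norm_apply_of_isCompactOperator [CompleteSpace 𝕜]
    [CompleteSpace E] {N : Submodule 𝕜 E} (hN : IsClosed (N : Set E)) {K : E →L[𝕜] F} (hK : IsCompactOperator ⇑K)
    (hNK : ∀ w ∈ N, ‖w‖ ≤ ‖K w‖) : FiniteDimensional 𝕜 N := by
  have : CompleteSpace N := hN.completeSpace_coe
  set KN := K ∘L N.subtypeL
  have hKN : IsClosedEmbedding KN :=
    (KN.antilipschitz_of_bound (K := 1) fun w => by simpa [KN] using hNK w w.2).isClosedEmbedding
      KN.uniformContinuous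
  refine FiniteDimensional.of_isCompact_closedBall₀ 𝕜 one_pos ?_
  refine (hKN.isCompact_preimage ((hK.comp_clm N.subtypeL).isCompact_closure_image_closedBall 1)
    ).of_isClosed_subset isClosed_closedBall fun w hw => subset_closure ⟨w, hw, rfl⟩

variable {A : E →L[𝕜] E}

theorem finiteDimensional_ker_of_isCompactOperator_sub_one [CompleteSpace 𝕜] [CompleteSpace E]
    (hA : IsCompactOperator ⇑(A - 1)) : FiniteDimensional 𝕜 A.ker :=
  .of_norm_le_norm_apply_of_isCompactOperator A.isClosed_ker hA fun w hw => by
    simp [show A w = 0 from hw]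

theorem exists_subseq_tendsto_of_isCompactOperator_sub_one (hA : IsCompactOperator ⇑(A - 1))
    {u : ℕ → E} (hu : ∀ n, ‖u n‖ ≤ 1) {y : E} (hy : Tendsto (A ∘ u) atTop (𝓝 y)) :
    ∃ x, ∃ φ : ℕ → ℕ, StrictMono φ ∧ Tendsto (u ∘ φ) atTop (𝓝 x) := by
  obtain ⟨z, -, φ, hφ, hz⟩ := (hA.isCompact_closure_image_closedBall 1).tendsto_subseq
    fun n => subset_closure ⟨u n, mem_closedBall_zero_iff.mpr (hu n), rfl⟩
  refine ⟨y - z, φ, hφ, ((hy.comp hφ.tendsto_atTop).sub hz).congr fun n => ?_⟩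
  simp

end NormedSpace

section InnerProductSpace

variable {𝕜 E : Type*} [RCLike 𝕜] [NormedAddCommGroup E] [InnerProductSpace 𝕜 E]
  {A : E →L[𝕜] E}

theorem exists_pos_mul_norm_le_of_isCompactOperator_sub_one (hA : IsCompactOperator ⇑(A - 1)) :
    ∃ c > 0, ∀ x ∈ A.kerᗮ, c * ‖x‖ ≤ ‖A x‖ := by
  by_contra! hsmall
  have hunit : ∀ n : ℕ, ∃ u ∈ A.kerᗮ, ‖u‖ = 1 ∧ ‖A u‖ < 1 / (n + 1 : ℝ) := by
    intro n
    obtain ⟨x, hx, hAx⟩ := hsmall (1 / (n + 1 : ℝ)) (by positivity)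
    have hx0 : x ≠ 0 := by rintro rfl; simp at hAx
    refine ⟨(‖x‖⁻¹ : 𝕜) • x, Submodule.smul_mem _ _ hx, norm_smul_inv_norm hx0, ?_⟩
    rw [map_smul, norm_smul, norm_inv, RCLike.norm_ofReal, abs_norm,
      inv_mul_lt_iff₀ (norm_pos_iff.mpr hx0)]
    linarith
  choose u hu_mem hu_norm hAu using hunit
  have hAu_lim : Tendsto (A ∘ u) atTop (𝓝 0) :=
    squeeze_zero_norm (fun n => (hAu n).le) tendsto_one_div_add_atTop_nhds_zero_nat
  obtain ⟨v, φ, hφ, hv⟩ :=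
    exists_subseq_tendsto_of_isCompactOperator_sub_one hA (fun n => (hu_norm n).le) hAu_lim
  have hv_norm : ‖v‖ = 1 := tendsto_nhds_unique hv.norm (by simp [hu_norm])
  have hv_perp : v ∈ A.kerᗮ :=
    A.ker.isClosed_orthogonal.mem_of_tendsto hv (Eventually.of_forall fun n => hu_mem _)
  have hv_ker : v ∈ A.ker :=
    tendsto_nhds_unique ((A.continuous.tendsto v).comp hv) (hAu_lim.comp hφ.tendsto_atTop)
  have hv_zero : v = 0 := A.ker.orthogonal_disjoint.le_bot ⟨hv_ker, hv_perp⟩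
  simp [hv_zero] at hv_norm

variable [CompleteSpace E]

theorem isClosed_range_of_isCompactOperator_sub_one (hA : IsCompactOperator ⇑(A - 1)) :
    IsClosed (A.range : Set E) := by
  obtain ⟨c, hc, hbound⟩ := exists_pos_mul_norm_le_of_isCompactOperator_sub_one hA
  have : FiniteDimensional 𝕜 A.ker := finiteDimensional_ker_of_isCompactOperator_sub_one hA
  have : CompleteSpace A.kerᗮ := A.ker.isClosed_orthogonal.completeSpace_coe
  set B := A ∘L A.kerᗮ.subtypeL
  have hB : AntilipschitzWith ⟨c⁻¹, (inv_pos.2 hc).le⟩ B :=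
    B.antilipschitz_of_bound fun x => by
      change ‖(x : E)‖ ≤ c⁻¹ * ‖A x‖
      rw [le_inv_mul_iff₀ hc]
      exact hbound x x.2
  have hrange : A.range = B.range := by
    rw [show (B : A.kerᗮ →ₗ[𝕜] E) = (A : E →ₗ[𝕜] E) ∘ₗ A.kerᗮ.subtype from rfl,
      LinearMap.range_comp, Submodule.range_subtype, LinearMap.range_eq_map,
      ← A.ker.sup_orthogonal_of_hasOrthogonalProjection, Submodule.map_sup,
      LinearMap.le_ker_iff_map.mp le_rfl, bot_sup_eq]
  rw [hrange, LinearMap.coe_range]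
  exact hB.isClosed_range B.uniformContinuous

theorem finiteDimensional_orthogonal_range_of_isCompactOperator_sub_one
    (hA : IsCompactOperator ⇑(A - 1)) : FiniteDimensional 𝕜 A.rangeᗮ := by
  refine .of_norm_le_norm_apply_of_isCompactOperator A.range.isClosed_orthogonal hA fun w hw => ?_
  have h_inner : ⟪(A - 1) w, w⟫_𝕜 = -⟪w, w⟫_𝕜 := by
    rw [sub_apply, inner_sub_left, hw (A w) (LinearMap.mem_range_self (A : E →ₗ[𝕜] E) w)]
    simp
  have h_sq : ‖w‖ ^ 2 ≤ ‖(A - 1) w‖ * ‖w‖ := by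
    calc ‖w‖ ^ 2 = ‖⟪(A - 1) w, w⟫_𝕜‖ := by
          rw [h_inner, norm_neg, inner_self_eq_norm_sq_to_K]; simp
      _ ≤ ‖(A - 1) w‖ * ‖w‖ := norm_inner_le_norm _ _
  rcases (norm_nonneg w).eq_or_lt with hw0 | hw0
  · simp [← hw0]
  · exact le_of_mul_le_mul_right (by nlinarith) hw0

theorem finiteDimensional_quotient_range_of_isCompactOperator_sub_one
    (hA : IsCompactOperator ⇑(A - 1)) : FiniteDimensional 𝕜 (E ⧸ A.range) := by
  have : CompleteSpace A.range :=
    (isClosed_range_of_isCompactOperator_sub_one hA).completeSpace_coe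
  have := finiteDimensional_orthogonal_range_of_isCompactOperator_sub_one hA
  exact (A.range.quotientEquivOfIsCompl _ A.range.isCompl_orthogonal).symm.finiteDimensional

end InnerProductSpace

namespace ContinuousLinearMap

section Parametrix

variable {𝕜 E F : Type*} [NontriviallyNormedField 𝕜] [NormedAddCommGroup E] [NormedSpace 𝕜 E]
  [NormedAddCommGroup F] [NormedSpace 𝕜 F]

structure IsParametrix (T : E →L[𝕜] F) (S : F →L[𝕜] E) : Prop where
  left : IsCompactOperator ⇑(S ∘L T - 1)
  right : IsCompactOperator ⇑(T ∘L S - 1)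

theorem IsParametrix.finiteDimensional_ker [CompleteSpace 𝕜] [CompleteSpace E] {T : E →L[𝕜] F}
    {S : F →L[𝕜] E} (h : IsParametrix T S) : FiniteDimensional 𝕜 T.ker :=
  have := finiteDimensional_ker_of_isCompactOperator_sub_one h.left
  Submodule.finiteDimensional_of_le (S₂ := (S ∘L T).ker) (LinearMap.ker_le_ker_comp _ _)

end Parametrix

theorem IsParametrix.finiteDimensional_quotient_range {𝕜 E F : Type*} [RCLike 𝕜]
    [NormedAddCommGroup E] [NormedSpace 𝕜 E] [NormedAddCommGroup F] [InnerProductSpace 𝕜 F]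
    [CompleteSpace F] {T : E →L[𝕜] F} {S : F →L[𝕜] E} (h : IsParametrix T S) :
    FiniteDimensional 𝕜 (F ⧸ T.range) :=
  have := finiteDimensional_quotient_range_of_isCompactOperator_sub_one h.right
  Module.Finite.of_surjective _ (Submodule.factor_surjective
    (p := (T ∘L S).range) (p' := T.range) (LinearMap.range_comp_le_range _ _))

section Compression

variable {𝕜 H : Type*} [NontriviallyNormedField 𝕜] [NormedAddCommGroup H] [NormedSpace 𝕜 H]
  {P Q : H →L[𝕜] H}

def rangeCompression (P Q : H →L[𝕜] H) : P.range →L[𝕜] Q.range :=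
  ((Q ∘L P) ∘L P.range.subtypeL).codRestrict Q.range
    fun x => LinearMap.mem_range_self (Q : H →ₗ[𝕜] H) (P x)

@[simp]
theorem coe_rangeCompression_apply (P Q : H →L[𝕜] H) (x : P.range) :
    (rangeCompression P Q x : H) = Q (P x) :=
  rfl

theorem isCompactOperator_rangeCompression_comp_sub_one (hP : IsIdempotentElem P)
    (hQ : IsIdempotentElem Q) (hQP : IsCompactOperator ⇑(Q - P)) :
    IsCompactOperator ⇑(rangeCompression Q P ∘L rangeCompression P Q - 1) := by
  have hmaps : ∀ x ∈ P.range, (P ∘L (Q - P)) x ∈ P.range :=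
    fun x _ => LinearMap.mem_range_self (P : H →ₗ[𝕜] H) _
  have hPP (y : H) : P (P y) = P y := DFunLike.congr_fun hP.eq y
  have hQQ (y : H) : Q (Q y) = Q y := DFunLike.congr_fun hQ.eq y
  convert (hQP.clm_comp P).restrict hmaps (IsIdempotentElem.isClosed_range hP) using 1
  ext ⟨_, y, rfl⟩
  simp [hPP, hQQ]

theorem isParametrix_rangeCompression (hP : IsIdempotentElem P) (hQ : IsIdempotentElem Q)
    (hPQ : IsCompactOperator ⇑(P - Q)) :
    IsParametrix (rangeCompression P Q) (rangeCompression Q P) := by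
  refine ⟨isCompactOperator_rangeCompression_comp_sub_one hP hQ ?_,
    isCompactOperator_rangeCompression_comp_sub_one hQ hP hPQ⟩
  rw [← neg_sub, FunLike.coe_neg]
  exact hPQ.neg

end Compression

theorem findex_comp_of_isParametrix {E F G : Type} [NormedAddCommGroup E] [NormedSpace ℂ E]
    [CompleteSpace E] [NormedAddCommGroup F] [InnerProductSpace ℂ F] [CompleteSpace F]
    [NormedAddCommGroup G] [InnerProductSpace ℂ G] [CompleteSpace G]
    {T : E →L[ℂ] F} {S : F →L[ℂ] E} {T' : F →L[ℂ] G} {S' : G →L[ℂ] F}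
    (h : IsParametrix T S) (h' : IsParametrix T' S') :
    findex (T' ∘L T) = findex T + findex T' := by
  have := h.finiteDimensional_ker
  have := h.finiteDimensional_quotient_range
  have := h'.finiteDimensional_ker
  have := h'.finiteDimensional_quotient_range
  rw [add_comm]
  exact LinearMap.index_comp (T' : F →ₗ[ℂ] G)

theorem findex_rangeCompression_comp {H : Type} [NormedAddCommGroup H] [InnerProductSpace ℂ H]
    [CompleteSpace H] {P Q R : H →L[ℂ] H} (hP : IsIdempotentElem P) (hQ : IsIdempotentElem Q)
    (hR : IsIdempotentElem R) (hPQ : IsCompactOperator ⇑(P - Q))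
    (hQR : IsCompactOperator ⇑(Q - R)) :
    findex (Q.rangeCompression R ∘L P.rangeCompression Q) =
      findex (P.rangeCompression Q) + findex (Q.rangeCompression R) := by
  have : CompleteSpace P.range := (IsIdempotentElem.isClosed_range hP).completeSpace_coe
  have : CompleteSpace Q.range := (IsIdempotentElem.isClosed_range hQ).completeSpace_coe
  have : CompleteSpace R.range := (IsIdempotentElem.isClosed_range hR).completeSpace_coe
  exact findex_comp_of_isParametrix (isParametrix_rangeCompression hP hQ hPQ)
    (isParametrix_rangeCompression hQ hR hQR)

end ContinuousLinearMap

theorem relative_index_logarithmic_property_general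
    {H : Type} [NormedAddCommGroup H] [InnerProductSpace ℂ H] [CompleteSpace H]
    (P Q R : H →L[ℂ] H)
    (hP : P.comp P = P) (hQ : Q.comp Q = Q) (hR : R.comp R = R)
    (hPQ : IsCompactOperator (⇑(P - Q)))
    (hQR : IsCompactOperator (⇑(Q - R))) :
    findex ((((R.comp Q).comp P).comp (LinearMap.range (P : H →ₗ[ℂ] H)).subtypeL).codRestrict
        (LinearMap.range (R : H →ₗ[ℂ] H)) (fun x => LinearMap.mem_range_self (R : H →ₗ[ℂ] H) (Q (P (x : H))))) =
      findex (((Q.comp P).comp (LinearMap.range (P : H →ₗ[ℂ] H)).subtypeL).codRestrict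
        (LinearMap.range (Q : H →ₗ[ℂ] H)) (fun x => LinearMap.mem_range_self (Q : H →ₗ[ℂ] H) (P (x : H)))) +
      findex (((R.comp Q).comp (LinearMap.range (Q : H →ₗ[ℂ] H)).subtypeL).codRestrict
        (LinearMap.range (R : H →ₗ[ℂ] H)) (fun x => LinearMap.mem_range_self (R : H →ₗ[ℂ] H) (Q (x : H)))) := by
  calc findex _ = findex (Q.rangeCompression R ∘L P.rangeCompression Q) := by
        congr 1
        exact ContinuousLinearMap.ext fun x =>
          Subtype.ext (congrArg R (DFunLike.congr_fun hQ (P x)).symm)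
    _ = _ := ContinuousLinearMap.findex_rangeCompression_comp hP hQ hR hPQ hQR

/-- Logarithmic property of the relative index: if `P, Q, R` are bounded projections
on a Hilbert space with pairwise compact differences, then the index of
`RQP : range P → range R` is the sum of the indices of `QP : range P → range Q` and of
`RQ : range Q → range R`. -/
theorem relative_index_logarithmic_property
    {H : Type} [NormedAddCommGroup H] [InnerProductSpace ℂ H] [CompleteSpace H]
    (P Q R : H →L[ℂ] H)
    (hP : P.comp P = P) (hQ : Q.comp Q = Q) (hR : R.comp R = R)
    (hPQ : IsCompactOperator (⇑(P - Q)))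
    (hQR : IsCompactOperator (⇑(Q - R)))
    (hPR : IsCompactOperator (⇑(P - R))) :
    findex ((((R.comp Q).comp P).comp (LinearMap.range (P : H →ₗ[ℂ] H)).subtypeL).codRestrict
        (LinearMap.range (R : H →ₗ[ℂ] H)) (fun x => LinearMap.mem_range_self (R : H →ₗ[ℂ] H) (Q (P (x : H))))) =
      findex (((Q.comp P).comp (LinearMap.range (P : H →ₗ[ℂ] H)).subtypeL).codRestrict
        (LinearMap.range (Q : H →ₗ[ℂ] H)) (fun x => LinearMap.mem_range_self (Q : H →ₗ[ℂ] H) (P (x : H)))) +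
      findex (((R.comp Q).comp (LinearMap.range (Q : H →ₗ[ℂ] H)).subtypeL).codRestrict
        (LinearMap.range (R : H →ₗ[ℂ] H)) (fun x => LinearMap.mem_range_self (R : H →ₗ[ℂ] H) (Q (x : H)))) :=
  relative_index_logarithmic_property_general P Q R hP hQ hR hPQ hQR
end
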